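/- arXiv:1712.00208 — 2 statements merged into one kernel-verified Lean document; each statement's English description precedes it below -/
import Mathlib

section
/- Let n ≥ 6 and let G be a connected simple graph on n vertices having a Laplacian eigenvalue of multiplicity n − 3. Then G contains no induced subgraph isomorphic to J₂, the graph on five vertices v₁, v₂, v₃, v₄, u whose edges are exactly v₁v₂, v₂v₃, v₃v₄, uv₁, uv₂, uv₄ (a 5-cycle with exactly one chord). -/
/-!
The eigenspace of `μ` has dimension `n - 3`, so it contains a nonzero vector `x` vanishing
outside `v₁, v₂, v₃, v₄`. The eigen-equations at `v₁`, `u` and `v₃` read `(d(v₁) - μ) x₁ = x₂`,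
`x₁ + x₂ + x₄ = 0` and `(d(v₃) - μ) x₃ = x₂ + x₄`, so `x₃ = 0` forces `x = 0`. The column sums
of the Laplacian vanish, so `μ ∑ x = 0`, and `∑ x = x₃` by the equation at `u`; hence `μ = 0`.
Then `x` is constant along edges, so it vanishes on the neighbours `v₁, v₂, v₄` of `u` and on
`v₃ ~ v₂`.
-/

/-- The graph `J₂` on five vertices `v₁, v₂, v₃, v₄, u` (labelled `0, 1, 2, 3, 4`),
whose edges are exactly `v₁v₂, v₂v₃, v₃v₄, uv₁, uv₂, uv₄`
(a 5-cycle with exactly one chord). -/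
def J2 : SimpleGraph (Fin 5) :=
  SimpleGraph.fromEdgeSet {s(0, 1), s(1, 2), s(2, 3), s(4, 0), s(4, 1), s(4, 3)}

open Matrix Module Finset

theorem Matrix.IsHermitian.finrank_eigenspace_toLin'_eq_rootMultiplicity {𝕜 ι : Type*}
    [RCLike 𝕜] [Fintype ι] [DecidableEq ι] {A : Matrix ι ι 𝕜} (hA : A.IsHermitian) (μ : 𝕜) :
    finrank 𝕜 (End.eigenspace (toLin' A) μ) = A.charpoly.rootMultiplicity μ := by
  have hsemi : End.IsSemisimple (toLin' A) := by
    refine ((WithLp.linearEquiv 2 𝕜 (ι → 𝕜)).isSemisimple_iff _ _ ?_).mp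
      (End.isFinitelySemisimple_iff_isSemisimple.mp
        (isSymmetric_toEuclideanLin_iff.mpr hA).isFinitelySemisimple)
    rfl
  rw [← hsemi.isFinitelySemisimple.maxGenEigenspace_eq_eigenspace,
    LinearMap.finrank_maxGenEigenspace_eq, charpoly_toLin']

theorem Module.End.exists_ne_zero_mem_eigenspace_eq_zero_off {K ι : Type*} [Field K] [Fintype ι]
    (φ : End K (ι → K)) (μ : K) (s : Finset ι)
    (h : Fintype.card ι < #s + finrank K (φ.eigenspace μ)) :
    ∃ x ∈ φ.eigenspace μ, x ≠ 0 ∧ ∀ i ∉ s, x i = 0 := by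
  classical
  let restrict : φ.eigenspace μ →ₗ[K] ({i // i ∉ s} → K) :=
    LinearMap.funLeft K K Subtype.val ∘ₗ (φ.eigenspace μ).subtype
  have hker : LinearMap.ker restrict ≠ ⊥ := by
    refine LinearMap.ker_ne_bot_of_finrank_lt ?_
    rw [finrank_fintype_fun_eq_card, Fintype.card_subtype_compl, Fintype.card_coe]
    have := card_le_univ s
    omega
  obtain ⟨⟨x, hx⟩, hx_ker, hx0⟩ := (Submodule.ne_bot_iff _).mp hker
  refine ⟨x, hx, fun h0 => hx0 (by simp [h0]), fun i hi => ?_⟩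
  simpa [restrict] using congrFun hx_ker ⟨i, hi⟩

namespace SimpleGraph

variable {V : Type*} [Fintype V] [DecidableEq V] (G : SimpleGraph V) [DecidableRel G.Adj]

theorem sum_lapMatrix_mulVec {R : Type*} [CommRing R] (x : V → R) :
    ∑ v, (G.lapMatrix R *ᵥ x) v = 0 := by
  have := dotProduct_mulVec (fun _ => (1 : R)) (G.lapMatrix R) x
  rw [← mulVec_transpose, G.isSymm_lapMatrix R, lapMatrix_mulVec_const_eq_zero,
    zero_dotProduct] at this
  simpa [dotProduct] using this

theorem lapMatrix_mulVec_apply_of_induced {R : Type*} [CommRing R] {ι : Type*} [Fintype ι]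
    {H : SimpleGraph ι} [DecidableRel H.Adj] {f : ι → V} (hf : Function.Injective f)
    (hadj : ∀ i j, G.Adj (f i) (f j) ↔ H.Adj i j) {x : V → R} (hx : ∀ v ∉ Set.range f, x v = 0)
    (j : ι) :
    (G.lapMatrix R *ᵥ x) (f j) =
      G.degree (f j) * x (f j) - ∑ i, if H.Adj j i then x (f i) else 0 := by
  rw [lapMatrix_mulVec_apply, neighborFinset_eq_filter, sum_filter]
  congr 1
  refine (Fintype.sum_of_injective f hf _ _ (fun v hv => by simp [hx v hv]) fun i => ?_).symm
  simp [hadj]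

theorem eq_zero_of_lapMatrix_mulVec_eq_smul_of_induced_J2
    {f : Fin 5 → V} (hf : Function.Injective f) (hadj : ∀ i j, G.Adj (f i) (f j) ↔ J2.Adj i j)
    {μ : ℝ} {x : V → ℝ} (hx : G.lapMatrix ℝ *ᵥ x = μ • x) (hx_supp : ∀ v ∉ Set.range f, x v = 0)
    (hx_u : x (f 4) = 0) : x = 0 := by
  classical
  have hloc (j : Fin 5) :
      G.degree (f j) * x (f j) - ∑ i, (if J2.Adj j i then x (f i) else 0) = μ * x (f j) := by
    rw [← G.lapMatrix_mulVec_apply_of_induced hf hadj hx_supp, hx, Pi.smul_apply, smul_eq_mul]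
  have h0 : G.degree (f 0) * x (f 0) - x (f 1) = μ * x (f 0) := by
    simpa [Fin.sum_univ_five, J2, hx_u] using hloc 0
  have h2 : G.degree (f 2) * x (f 2) - (x (f 1) + x (f 3)) = μ * x (f 2) := by
    simpa [Fin.sum_univ_five, J2] using hloc 2
  have h4 : x (f 0) + x (f 1) + x (f 3) = 0 := by
    have := hloc 4
    simp [Fin.sum_univ_five, J2, hx_u] at this
    linarith
  have hμ : μ * x (f 2) = 0 := by
    have hsum_x : ∑ v, x v = ∑ i, x (f i) :=
      (Fintype.sum_of_injective f hf _ _ hx_supp fun _ => rfl).symm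
    have := G.sum_lapMatrix_mulVec x
    simp only [hx, Pi.smul_apply, smul_eq_mul, ← mul_sum, hsum_x, Fin.sum_univ_five,
      hx_u] at this
    linear_combination this - μ * h4
  have hvals : ∀ i, x (f i) = 0 := by
    rcases mul_eq_zero.mp hμ with rfl | hx2
    · have hconst := (lapMatrix_mulVec_eq_zero_iff_forall_adj G).mp (by simpa using hx)
      have hnbr (i : Fin 5) (hi : J2.Adj i 4) : x (f i) = 0 :=
        (hconst _ _ ((hadj i 4).mpr hi)).trans hx_u
      have hx0 := hnbr 0 (by simp [J2])
      have hx1 := hnbr 1 (by simp [J2])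
      have hx3 := hnbr 3 (by simp [J2])
      have hx2 : x (f 2) = x (f 1) := hconst _ _ ((hadj 2 1).mpr (by simp [J2]))
      intro i
      fin_cases i <;> simp_all
    · have hx0 : x (f 0) = 0 := by rw [hx2] at h2; linarith
      have hx1 : x (f 1) = 0 := by rw [hx0] at h0; linarith
      have hx3 : x (f 3) = 0 := by linarith
      intro i
      fin_cases i <;> simp_all
  funext v
  by_cases hv : v ∈ Set.range f
  · obtain ⟨i, rfl⟩ := hv
    exact hvals i
  · exact hx_supp v hv

end SimpleGraph

theorem no_induced_J2_of_laplacian_multiplicity_general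
    (n : ℕ)
    (G : SimpleGraph (Fin n)) [DecidableRel G.Adj]
    (hmult : ∃ α : ℝ, ((G.lapMatrix ℝ).charpoly.rootMultiplicity α) = n - 3) :
    ¬ ∃ f : Fin 5 → Fin n, Function.Injective f ∧
        ∀ i j, G.Adj (f i) (f j) ↔ J2.Adj i j := by
  rintro ⟨f, hf, hadj⟩
  obtain ⟨μ, hμ⟩ := hmult
  have h5 : 5 ≤ n := by simpa using Fintype.card_le_of_injective f hf
  set s := (univ.erase 4).map ⟨f, hf⟩
  obtain ⟨x, hx_eig, hx_ne, hx_supp⟩ :=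
    End.exists_ne_zero_mem_eigenspace_eq_zero_off (toLin' (G.lapMatrix ℝ)) μ s (by
      rw [IsHermitian.finrank_eigenspace_toLin'_eq_rootMultiplicity (G.isHermitian_lapMatrix ℝ),
        hμ, card_map, card_erase_of_mem (mem_univ _), card_univ, Fintype.card_fin,
        Fintype.card_fin]
      omega)
  refine hx_ne (G.eq_zero_of_lapMatrix_mulVec_eq_smul_of_induced_J2 hf hadj (μ := μ) ?_ ?_ ?_)
  · simpa using End.mem_eigenspace_iff.mp hx_eig
  · refine fun v hv => hx_supp v fun hvs => hv ?_
    obtain ⟨i, -, rfl⟩ := mem_map.mp hvs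
    exact ⟨i, rfl⟩
  · exact hx_supp (f 4) (by simp [s])

/-- Let `n ≥ 6` and let `G` be a connected simple graph on `n` vertices having a
Laplacian eigenvalue of multiplicity `n − 3`. Then `G` contains no induced subgraph
isomorphic to `J₂`. -/
theorem no_induced_J2_of_laplacian_multiplicity
    (n : ℕ) (hn : 6 ≤ n)
    (G : SimpleGraph (Fin n)) [DecidableRel G.Adj] (hconn : G.Connected)
    (hmult : ∃ α : ℝ, ((G.lapMatrix ℝ).charpoly.rootMultiplicity α) = n - 3) :
    ¬ ∃ f : Fin 5 → Fin n, Function.Injective f ∧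
        ∀ i j, G.Adj (f i) (f j) ↔ J2.Adj i j :=
  no_induced_J2_of_laplacian_multiplicity_general n G hmult
end

section
/- For integers m > r ≥ 1 with 2m ≥ 5, the Laplacian spectrum of the graph G_{m,r} on 2m vertices is the multiset {(1/2)(3m − 2r + √(m² + 4mr − 4r²))^{1}, (1/2)(3m − 2r − √(m² + 4mr − 4r²))^{1}, m^{2m−3}, 0^{1}}. -/
/-- The graph `G_{m,r}` on `2m` vertices (for `m > r ≥ 1`): two disjoint copies of
`K_r ∇ ((m − r) K₁)` — in the first copy the clique is `{0, …, r−1}` and the independent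
set is `{r, …, m−1}`, in the second copy the clique is `{m, …, m+r−1}` and the independent
set is `{m+r, …, 2m−1}` — together with all edges between the two independent sets. -/
def Gmr (m r : ℕ) : SimpleGraph (Fin (2 * m)) where
  Adj u v := u ≠ v ∧
    ((u.val < m ∧ v.val < m ∧ (u.val < r ∨ v.val < r)) ∨
     (m ≤ u.val ∧ m ≤ v.val ∧ (u.val < m + r ∨ v.val < m + r)) ∨
     (r ≤ u.val ∧ u.val < m ∧ m + r ≤ v.val) ∨
     (r ≤ v.val ∧ v.val < m ∧ m + r ≤ u.val))
  symm := by constructor; intro u v h; exact ⟨h.1.symm, by tauto⟩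
  loopless := by constructor; intro u h; exact h.1 rfl

instance (m r : ℕ) : DecidableRel (Gmr m r).Adj := fun u v =>
  decidable_of_iff (u ≠ v ∧
    ((u.val < m ∧ v.val < m ∧ (u.val < r ∨ v.val < r)) ∨
     (m ≤ u.val ∧ m ≤ v.val ∧ (u.val < m + r ∨ v.val < m + r)) ∨
     (r ≤ u.val ∧ u.val < m ∧ m + r ≤ v.val) ∨
     (r ≤ v.val ∧ v.val < m ∧ m + r ≤ u.val))) Iff.rfl

/-!
Split the vertices into four blocks: clique, independent set, clique, independent set. Clique
vertices have degree `m - 1` and independent vertices degree `m`, so `L = m • 1 - M`, where `M`,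
the adjacency matrix plus the identity on the cliques, is constant on pairs of blocks: `M = P B Pᵀ`
for a `4 × 4` zero-one pattern `B` and the block-indicator matrix `P`. Sylvester's determinant
identity turns `χ(m • 1 - P B Pᵀ)` into `(X - m) ^ (2m - 4) χ(m • 1 - B PᵀP)`, and `PᵀP` is the
diagonal matrix of block sizes `r, m - r, r, m - r`. The `4 × 4` quotient matrix has
characteristic polynomial `X (X - m) (X² - (3m - 2r) X + 2 (m - r)²)`, whose quadratic factor
has discriminant `m² + 4mr - 4r²`.
-/

open Finset Matrix Polynomial

namespace Matrix

variable {R : Type*} [CommRing R] {m n k : Type*}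

theorem charpoly_scalar_add_mul_comm [Fintype m] [Fintype n] [DecidableEq m] [DecidableEq n]
    (c : R) (A : Matrix m n R) (B : Matrix n m R) :
    (X - C c) ^ Fintype.card n * (scalar m c + A * B).charpoly =
      (X - C c) ^ Fintype.card m * (scalar n c + B * A).charpoly := by
  have h := congrArg (·.comp (X - C c)) (charpoly_mul_comm' A B)
  rw [← add_sub_cancel_left (scalar m c) (A * B), ← add_sub_cancel_left (scalar n c) (B * A),
    charpoly_sub_scalar, charpoly_sub_scalar] at h
  have hX : (X + C c).comp (X - C c) = X := by simp
  rwa [mul_comp, mul_comp, X_pow_comp, X_pow_comp, comp_assoc, comp_assoc, hX, comp_X,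
    comp_X] at h

theorem one_submatrix_mul_mul_transpose [Fintype k] [DecidableEq k] (B : Matrix k k R)
    (f : n → k) :
    (1 : Matrix k k R).submatrix f id * (B * ((1 : Matrix k k R).submatrix f id)ᵀ) =
      B.submatrix f f := by
  ext i j
  simp [mul_apply, one_apply]

theorem transpose_one_submatrix_mul_self [Fintype n] [DecidableEq k] (f : n → k) :
    ((1 : Matrix k k R).submatrix f id)ᵀ * (1 : Matrix k k R).submatrix f id =
      diagonal fun c => (#{i | f i = c} : R) := by
  ext c d
  simp only [mul_apply, transpose_apply, submatrix_apply, id, one_apply, ite_mul, one_mul,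
    zero_mul, ← ite_and, sum_boole, diagonal_apply]
  rcases eq_or_ne c d with rfl | hcd
  · simp
  · rw [if_neg hcd, filter_false_of_mem fun i _ h => hcd (h.1.symm.trans h.2), card_empty,
      Nat.cast_zero]

theorem charpoly_scalar_sub_submatrix [Fintype n] [DecidableEq n] [Fintype k] [DecidableEq k]
    (c : R) (B : Matrix k k R) (f : n → k) :
    (X - C c) ^ Fintype.card k * (scalar n c - B.submatrix f f).charpoly =
      (X - C c) ^ Fintype.card n *
        (scalar k c - B * diagonal fun j => (#{i | f i = j} : R)).charpoly := by
  set P := (1 : Matrix k k R).submatrix f id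
  have hn : scalar n c - B.submatrix f f = scalar n c + P * -(B * Pᵀ) := by
    rw [Matrix.mul_neg, one_submatrix_mul_mul_transpose, sub_eq_add_neg]
  have hk : scalar k c - B * diagonal (fun j => (#{i | f i = j} : R)) =
      scalar k c + -(B * Pᵀ) * P := by
    rw [Matrix.neg_mul, Matrix.mul_assoc, transpose_one_submatrix_mul_self, sub_eq_add_neg]
  rw [hn, hk]
  exact charpoly_scalar_add_mul_comm c P (-(B * Pᵀ))

theorem sum_submatrix_apply [Fintype n] [Fintype k] [DecidableEq k] (B : Matrix k k R)
    (f : n → k) (i : n) :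
    ∑ j, B.submatrix f f i j = ∑ c, B (f i) c * #{j | f j = c} := by
  simp only [submatrix_apply, ← sum_fiberwise' univ f (B (f i)), sum_const, nsmul_eq_mul,
    mul_comm]

end Matrix

theorem SimpleGraph.lapMatrix_eq_scalar_sub {V R : Type*} [Fintype V] [DecidableEq V] [Ring R]
    (G : SimpleGraph V) [DecidableRel G.Adj] (d : V → R) (s : R)
    (hrow : ∀ i, ∑ j, (G.adjMatrix R + diagonal d) i j = s) :
    G.lapMatrix R = scalar V s - (G.adjMatrix R + diagonal d) := by
  ext i j
  have hdeg : (G.degree i : R) = s - d i := by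
    rw [← hrow i]
    simp [sum_add_distrib, diagonal_apply, ← card_neighborFinset_eq_degree,
      neighborFinset_eq_filter]
  rcases eq_or_ne i j with rfl | hij
  · simp [lapMatrix, degMatrix, hdeg]
  · simp [lapMatrix, degMatrix, hij]

theorem Fin.card_filter_val_Ico {n a b : ℕ} (hb : b ≤ n) :
    #{i : Fin n | a ≤ i.val ∧ i.val < b} = b - a := by
  rw [← card_map Fin.valEmbedding, ← Nat.card_Ico a b]
  congr 1
  ext j
  simp only [mem_map, mem_filter, mem_univ, true_and, Fin.valEmbedding_apply, mem_Ico]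
  exact ⟨fun ⟨i, hi, hij⟩ => hij ▸ hi, fun hj => ⟨⟨j, by omega⟩, hj, rfl⟩⟩

theorem Polynomial.X_sq_sub_C_mul_X_add_C_eq_mul {K : Type*} [Field K] [NeZero (2 : K)]
    {s p δ : K} (hδ : δ ^ 2 = s ^ 2 - 4 * p) :
    X ^ 2 - C s * X + C p = (X - C ((s + δ) / 2)) * (X - C ((s - δ) / 2)) := by
  have hsum : (s + δ) / 2 + (s - δ) / 2 = s := by field_simp; ring
  have hprod : (s + δ) / 2 * ((s - δ) / 2) = p := by field_simp; linear_combination -hδ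
  rw [show C s = C ((s + δ) / 2) + C ((s - δ) / 2) by rw [← C_add, hsum],
    show C p = C ((s + δ) / 2) * C ((s - δ) / 2) by rw [← C_mul, hprod]]
  ring

namespace Gmr

variable {m r : ℕ}

def block (m r : ℕ) (i : Fin (2 * m)) : Fin 4 :=
  if i.val < r then 0 else if i.val < m then 1 else if i.val < m + r then 2 else 3

def pattern : Matrix (Fin 4) (Fin 4) ℝ :=
  !![1, 1, 0, 0;
     1, 0, 0, 1;
     0, 0, 1, 1;
     0, 1, 1, 0]

def blockSize (m r : ℕ) : Fin 4 → ℝ := ![r, m - r, r, m - r]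

theorem adjMatrix_add_diagonal (hrm : r ≤ m) :
    (Gmr m r).adjMatrix ℝ + diagonal (fun i => pattern (block m r i) (block m r i)) =
      pattern.submatrix (block m r) (block m r) := by
  ext i j
  rcases eq_or_ne i j with rfl | hij
  · simp
  · have hv : i.val ≠ j.val := Fin.val_ne_of_ne hij
    simp only [Matrix.add_apply, SimpleGraph.adjMatrix_apply, diagonal_apply_ne _ hij, add_zero,
      submatrix_apply]
    simp only [Gmr, block, pattern, ne_eq, hij, not_false_eq_true, true_and]
    split_ifs <;> simp <;> omega

theorem card_block (hrm : r ≤ m) (c : Fin 4) :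
    (#{i | block m r i = c} : ℝ) = blockSize m r c := by
  have hc : ∀ a b, b ≤ 2 * m → (∀ i, block m r i = c ↔ a ≤ i.val ∧ i.val < b) →
      (#{i | block m r i = c} : ℝ) = (b - a : ℕ) := fun a b hb h => by
    rw [filter_congr fun i _ => h i, Fin.card_filter_val_Ico hb]
  fin_cases c <;> simp only [blockSize]
  · rw [hc 0 r (by omega) fun i => by unfold block; split_ifs <;> simp <;> omega]
    simp
  · rw [hc r m (by omega) fun i => by unfold block; split_ifs <;> simp <;> omega]
    simp [Nat.cast_sub hrm]
  · rw [hc m (m + r) (by omega) fun i => by unfold block; split_ifs <;> simp <;> omega]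
    simp
  · rw [hc (m + r) (2 * m) le_rfl fun i => by unfold block; split_ifs <;> simp <;> omega]
    simp [Nat.cast_sub (by omega : m + r ≤ 2 * m)]
    ring

theorem pattern_mulVec_blockSize : pattern *ᵥ blockSize m r = fun _ => (m : ℝ) := by
  ext b
  fin_cases b <;> simp [pattern, blockSize, mulVec, dotProduct, Fin.sum_univ_four]

theorem lapMatrix_eq (hrm : r ≤ m) :
    (Gmr m r).lapMatrix ℝ = scalar _ (m : ℝ) - pattern.submatrix (block m r) (block m r) := by
  rw [← adjMatrix_add_diagonal hrm]
  refine (Gmr m r).lapMatrix_eq_scalar_sub _ _ fun i => ?_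
  rw [adjMatrix_add_diagonal hrm, sum_submatrix_apply]
  simp_rw [card_block hrm]
  exact congrFun pattern_mulVec_blockSize (block m r i)

theorem charpoly_quotient :
    (scalar (Fin 4) (m : ℝ) - pattern * diagonal (blockSize m r)).charpoly =
      X * (X - C (m : ℝ)) * (X ^ 2 - C (3 * m - 2 * r : ℝ) * X + C (2 * (m - r) ^ 2 : ℝ)) := by
  set a : ℝ := m - r
  have hQ : scalar (Fin 4) (m : ℝ) - pattern * diagonal (blockSize m r) =
      !![a, -a, 0, 0; -r, a + r, 0, -a; 0, 0, a, -a; 0, -a, -r, a + r] := by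
    ext i j
    simp only [Matrix.sub_apply, mul_diagonal, scalar_apply, diagonal_apply]
    fin_cases i <;> fin_cases j <;> simp [pattern, blockSize, a]
  have hm : (m : ℝ) = a + r := by ring
  rw [hQ, hm, charpoly, det_succ_row_zero]
  simp [Fin.sum_univ_succ, det_fin_three, Fin.succAbove, map_ofNat]
  ring

theorem charpoly_lapMatrix (hrm : r ≤ m) (hm : 2 ≤ m) :
    ((Gmr m r).lapMatrix ℝ).charpoly =
      X * (X - C (m : ℝ)) ^ (2 * m - 3) *
        (X ^ 2 - C (3 * m - 2 * r : ℝ) * X + C (2 * (m - r) ^ 2 : ℝ)) := by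
  have h := charpoly_scalar_sub_submatrix (m : ℝ) pattern (block m r)
  rw [← lapMatrix_eq hrm, Fintype.card_fin, Fintype.card_fin, funext (card_block hrm),
    charpoly_quotient] at h
  refine mul_left_cancel₀ (pow_ne_zero 4 (X_sub_C_ne_zero (m : ℝ))) (h.trans ?_)
  obtain ⟨k, hk⟩ : ∃ k, 2 * m = k + 4 := ⟨2 * m - 4, by omega⟩
  rw [hk, show k + 4 - 3 = k + 1 by omega]
  ring

end Gmr

theorem lapSpectrum_Gmr_general (m r : ℕ) (hr : 1 ≤ r) (hrm : r < m) :
    ((Gmr m r).lapMatrix ℝ).charpoly.roots =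
      {(3 * (m : ℝ) - 2 * (r : ℝ) + Real.sqrt ((m : ℝ) ^ 2 + 4 * (m : ℝ) * (r : ℝ) - 4 * (r : ℝ) ^ 2)) / 2,
       (3 * (m : ℝ) - 2 * (r : ℝ) - Real.sqrt ((m : ℝ) ^ 2 + 4 * (m : ℝ) * (r : ℝ) - 4 * (r : ℝ) ^ 2)) / 2} +
      Multiset.replicate (2 * m - 3) (m : ℝ) + {0} := by
  have hdisc : (m : ℝ) ^ 2 + 4 * m * r - 4 * r ^ 2 =
      (3 * m - 2 * r) ^ 2 - 4 * (2 * (m - r) ^ 2) := by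
    ring
  have hnonneg : 0 ≤ (m : ℝ) ^ 2 + 4 * m * r - 4 * r ^ 2 := by
    have : (r : ℝ) ≤ m := by exact_mod_cast hrm.le
    nlinarith
  rw [Gmr.charpoly_lapMatrix hrm.le (by omega),
    X_sq_sub_C_mul_X_add_C_eq_mul ((Real.sq_sqrt hnonneg).trans hdisc)]
  refine (congrArg roots ?_).trans (roots_multiset_prod_X_sub_C _)
  simp [Multiset.map_replicate]
  ring

/-- For integers `m > r ≥ 1` with `2m ≥ 5`, the Laplacian spectrum of `G_{m,r}`
is the multiset
`{((3m − 2r + √(m² + 4mr − 4r²))/2)^{1}, ((3m − 2r − √(m² + 4mr − 4r²))/2)^{1}, m^{2m−3}, 0^{1}}`. -/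
theorem lapSpectrum_Gmr (m r : ℕ) (hr : 1 ≤ r) (hrm : r < m) (hm : 5 ≤ 2 * m) :
    ((Gmr m r).lapMatrix ℝ).charpoly.roots =
      {(3 * (m : ℝ) - 2 * (r : ℝ) + Real.sqrt ((m : ℝ) ^ 2 + 4 * (m : ℝ) * (r : ℝ) - 4 * (r : ℝ) ^ 2)) / 2,
       (3 * (m : ℝ) - 2 * (r : ℝ) - Real.sqrt ((m : ℝ) ^ 2 + 4 * (m : ℝ) * (r : ℝ) - 4 * (r : ℝ) ^ 2)) / 2} +
      Multiset.replicate (2 * m - 3) (m : ℝ) + {0} :=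
  lapSpectrum_Gmr_general m r hr hrm
end
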